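/- Let E be an n-dimensional real inner product space (e.g. EuclideanSpace ℝ (Fin n)). Then for any n+2 points P₀,P₁,…,P_{n+1} ∈ E, the Gram determinant det(⟨Pᵢ − P₀, Pₖ − P₀⟩)_{i,k=1,…,n+1} vanishes; equivalently, F_{n+1}(P) = 0 for the Euclidean world function Σ_E(P,Q) = ½‖P − Q‖². (Necessity of condition II: every (n+1)th order squared length vanishes in n-dimensional Euclidean space.) -/

import Mathlib

/-- In an `n`-dimensional real inner product space, the Gram determinant of the
`n + 1` vectors `Pᵢ − P₀` built from any `n + 2` points vanishes; equivalently
`F_{n+1}(P) = 0` for the Euclidean world function `Σ_E(P,Q) = ½‖P − Q‖²`. -/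
theorem gram_determinant_vanishes
    (n : ℕ) (E : Type) [NormedAddCommGroup E] [InnerProductSpace ℝ E]
    [FiniteDimensional ℝ E] (hdim : Module.finrank ℝ E = n)
    (P : Fin (n + 2) → E) :
    Matrix.det (Matrix.of fun i k : Fin (n + 1) =>
        (inner ℝ (P i.succ - P 0) (P k.succ - P 0) : ℝ)) = 0 ∧
      Matrix.det (Matrix.of fun i k : Fin (n + 1) =>
        ((1 / 2) * ‖P i.succ - P 0‖ ^ 2 + (1 / 2) * ‖P 0 - P k.succ‖ ^ 2
          - (1 / 2) * ‖P i.succ - P k.succ‖ ^ 2)) = 0 := by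
  set v : Fin (n + 1) → E := fun i => P i.succ - P 0 with hv
  have hdep : ¬ LinearIndependent ℝ v := by
    intro h
    have := h.fintype_card_le_finrank
    simp [hdim, Fintype.card_fin] at this
  rw [Fintype.not_linearIndependent_iff] at hdep
  obtain ⟨c, hc, j, hj⟩ := hdep
  have hgram : Matrix.det (Matrix.of fun i k : Fin (n + 1) =>
      (inner ℝ (v i) (v k) : ℝ)) = 0 := by
    rw [← Matrix.exists_mulVec_eq_zero_iff]
    refine ⟨c, Function.ne_iff.mpr ⟨j, hj⟩, ?_⟩
    funext i
    simp only [Matrix.mulVec, dotProduct, Matrix.of_apply, Pi.zero_apply]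
    calc ∑ k, inner ℝ (v i) (v k) * c k
        = inner ℝ (v i) (∑ k, c k • v k) := by
          rw [inner_sum]
          exact Finset.sum_congr rfl fun k _ => by
            rw [real_inner_smul_right]; ring
      _ = 0 := by rw [hc, inner_zero_right]
  constructor
  · exact hgram
  · have : (Matrix.of fun i k : Fin (n + 1) =>
        ((1 / 2) * ‖P i.succ - P 0‖ ^ 2 + (1 / 2) * ‖P 0 - P k.succ‖ ^ 2
          - (1 / 2) * ‖P i.succ - P k.succ‖ ^ 2)) =
        (Matrix.of fun i k : Fin (n + 1) => (inner ℝ (v i) (v k) : ℝ)) := by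
      funext i k
      have key : ∀ a b : E, (1 / 2) * ‖a‖ ^ 2 + (1 / 2) * ‖b‖ ^ 2
          - (1 / 2) * ‖a - b‖ ^ 2 = (inner ℝ a b : ℝ) := fun a b => by
        rw [norm_sub_sq_real]; ring
      have h1 : P i.succ - P k.succ = (P i.succ - P 0) - (P k.succ - P 0) := by abel
      have h2 : ‖P 0 - P k.succ‖ = ‖P k.succ - P 0‖ := norm_sub_rev _ _
      simp only [Matrix.of_apply, hv]
      rw [h1, h2, key]
    rw [this]; exact hgram
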